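/- Let S be a birestriction monoid and m : S → S a map. Then m(a) is the maximum element of the σ-class of a (with respect to the natural partial order) for every a ∈ S if and only if the following two conditions hold: (M1) a ≤ m(a) for all a ∈ S, and (M2) m(a e) = m(a) for all a ∈ S and e ∈ P(S). -/
import Mathlib


/-- A birestriction semigroup: a semigroup with unary operations `bstar` (`^*`) and
`bplus` (`^+`) satisfying the defining identities. -/
class BirSgp (S : Type*) extends Semigroup S where
  bstar : S → S
  bplus : S → S
  mul_bstar : ∀ x : S, x * bstar x = x
  bstar_comm : ∀ x y : S, bstar x * bstar y = bstar y * bstar x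
  bstar_mul_bstar : ∀ x y : S, bstar (x * bstar y) = bstar x * bstar y
  bstar_mul : ∀ x y : S, bstar x * y = y * bstar (x * y)
  bplus_mul : ∀ x : S, bplus x * x = x
  bplus_comm : ∀ x y : S, bplus x * bplus y = bplus y * bplus x
  bplus_mul_bplus : ∀ x y : S, bplus (bplus x * y) = bplus x * bplus y
  mul_bplus : ∀ x y : S, x * bplus y = bplus (x * y) * x
  bstar_bplus : ∀ x : S, bstar (bplus x) = bplus x
  bplus_bstar : ∀ x : S, bplus (bstar x) = bstar x

/-- A birestriction monoid: a birestriction semigroup with an identity element. -/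
class BirMon (S : Type*) extends Monoid S, BirSgp S

open BirSgp

/-- The set of projections `P(S) = {s^* : s ∈ S}`. -/
def proj (S : Type*) [BirSgp S] : Set S := Set.range (bstar : S → S)

/-- The natural partial order: `s ≤ t` iff `s = e * t` for some projection `e`. -/
def nle {S : Type*} [BirSgp S] (s t : S) : Prop := ∃ e ∈ proj S, s = e * t

/-- The relation σ: `s σ t` iff `e * s = e * t` for some projection `e`. -/
def sig {S : Type*} [BirSgp S] (s t : S) : Prop := ∃ e ∈ proj S, e * s = e * t

/-- A birestriction semigroup is proper. -/
def IsProper (S : Type*) [BirSgp S] : Prop :=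
  (∀ s t : S, bstar s = bstar t → sig s t → s = t) ∧
  (∀ s t : S, bplus s = bplus t → sig s t → s = t)

section Helpers

variable {S : Type*} [BirMon S]

lemma bstar_one' : bstar (1 : S) = 1 := by
  have h := BirSgp.mul_bstar (1 : S)
  simpa using h

lemma one_mem_proj' : (1 : S) ∈ proj S := ⟨1, bstar_one'⟩

lemma bstar_bstar' (x : S) : bstar (bstar x) = bstar x := by
  have h := BirSgp.bstar_mul_bstar (1 : S) x
  simpa [bstar_one'] using h

lemma proj_idem' {e : S} (he : e ∈ proj S) : e * e = e := by
  obtain ⟨x, rfl⟩ := he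
  have h := BirSgp.mul_bstar (bstar x)
  rwa [bstar_bstar'] at h

lemma proj_mul_mem' {e f : S} (he : e ∈ proj S) (hf : f ∈ proj S) : e * f ∈ proj S := by
  obtain ⟨x, rfl⟩ := he
  obtain ⟨y, rfl⟩ := hf
  exact ⟨x * bstar y, BirSgp.bstar_mul_bstar x y⟩

lemma proj_comm' {e f : S} (he : e ∈ proj S) (hf : f ∈ proj S) : e * f = f * e := by
  obtain ⟨x, rfl⟩ := he
  obtain ⟨y, rfl⟩ := hf
  exact BirSgp.bstar_comm x y

lemma bplus_mem_proj' (x : S) : bplus x ∈ proj S := ⟨bplus x, BirSgp.bstar_bplus x⟩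

lemma sig_refl' (a : S) : sig a a := ⟨1, one_mem_proj', rfl⟩

lemma sig_symm' {a b : S} (h : sig a b) : sig b a := by
  obtain ⟨e, he, h⟩ := h
  exact ⟨e, he, h.symm⟩

lemma sig_trans' {a b c : S} (h1 : sig a b) (h2 : sig b c) : sig a c := by
  obtain ⟨e, he, h1⟩ := h1
  obtain ⟨f, hf, h2⟩ := h2
  refine ⟨e * f, proj_mul_mem' he hf, ?_⟩
  calc e * f * a = f * e * a := by rw [proj_comm' he hf]
    _ = f * (e * a) := by rw [mul_assoc]
    _ = f * (e * b) := by rw [h1]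
    _ = e * (f * b) := by rw [← mul_assoc, ← proj_comm' he hf, mul_assoc]
    _ = e * (f * c) := by rw [h2]
    _ = e * f * c := by rw [mul_assoc]

lemma nle_sig' {a b : S} (h : nle a b) : sig a b := by
  obtain ⟨e, he, h⟩ := h
  refine ⟨e, he, ?_⟩
  rw [h, ← mul_assoc, proj_idem' he]

lemma nle_antisymm' {s t : S} (h1 : nle s t) (h2 : nle t s) : s = t := by
  obtain ⟨e, he, h1⟩ := h1
  obtain ⟨f, hf, h2⟩ := h2
  have ht : t = (e * f) * t := by
    calc t = f * s := h2
      _ = f * (e * t) := by rw [h1]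
      _ = f * e * t := by rw [mul_assoc]
      _ = e * f * t := by rw [proj_comm' he hf]
  calc s = e * t := h1
    _ = e * ((e * f) * t) := by rw [← ht]
    _ = (e * f) * t := by rw [← mul_assoc, ← mul_assoc, proj_idem' he]
    _ = t := ht.symm

/-- `e * a = a * f` for some projection `f`. -/
lemma proj_mul_shift' {e : S} (he : e ∈ proj S) (a : S) :
    ∃ f ∈ proj S, e * a = a * f := by
  obtain ⟨x, rfl⟩ := he
  exact ⟨bstar (x * a), ⟨x * a, rfl⟩, BirSgp.bstar_mul x a⟩

lemma sig_mul_proj' {e : S} (he : e ∈ proj S) (a : S) : sig a (a * e) := by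
  obtain ⟨x, rfl⟩ := he
  -- bstar x = bplus (bstar x)
  have hbp : a * bstar x = bplus (a * bstar x) * a := by
    conv_lhs => rw [← BirSgp.bplus_bstar x, BirSgp.mul_bplus]
  refine ⟨bplus (a * bstar x), bplus_mem_proj' _, ?_⟩
  have hidem : bplus (a * bstar x) * bplus (a * bstar x) = bplus (a * bstar x) :=
    proj_idem' (bplus_mem_proj' _)
  calc bplus (a * bstar x) * a
      = bplus (a * bstar x) * bplus (a * bstar x) * a := by rw [hidem]
    _ = bplus (a * bstar x) * (bplus (a * bstar x) * a) := by rw [mul_assoc]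
    _ = bplus (a * bstar x) * (a * bstar x) := by rw [← hbp]

end Helpers


/-- `m(a)` is the maximum of the σ-class of `a` for all `a` iff
(M1) `a ≤ m(a)` for all `a` and (M2) `m(a e) = m(a)` for all `a` and projections `e`. -/
theorem statement14 {S : Type*} [BirMon S] (m : S → S) :
    (∀ a : S, sig a (m a) ∧ ∀ b : S, sig a b → nle b (m a)) ↔
    ((∀ a : S, nle a (m a)) ∧ (∀ a : S, ∀ e ∈ proj S, m (a * e) = m a)) := by
  constructor
  · rintro hmax
    refine ⟨fun a => (hmax a).2 a (sig_refl' a), fun a e he => ?_⟩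
    have sab : sig a (a * e) := sig_mul_proj' he a
    apply nle_antisymm'
    · exact (hmax a).2 (m (a * e)) (sig_trans' sab (hmax (a * e)).1)
    · exact (hmax (a * e)).2 (m a) (sig_trans' (sig_symm' sab) (hmax a).1)
  · rintro ⟨hM1, hM2⟩ a
    have key : ∀ b : S, sig a b → m a = m b := by
      rintro b ⟨e, he, hab⟩
      obtain ⟨f, hf, hfa⟩ := proj_mul_shift' he a
      obtain ⟨g, hg, hgb⟩ := proj_mul_shift' he b
      calc m a = m (a * f) := (hM2 a f hf).symm
        _ = m (e * a) := by rw [hfa]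
        _ = m (e * b) := by rw [hab]
        _ = m (b * g) := by rw [hgb]
        _ = m b := hM2 b g hg
    exact ⟨nle_sig' (hM1 a), fun b hab => (key b hab) ▸ hM1 b⟩
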